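/- Let (H,R) be quasi-triangular and A braided commutative over (H,R). The lifted element R̃ = (1_A⋊R₁)⊗_A(1_A⋊R₂) in (A⋊H)⊗_A(A⋊H) satisfies the lifted hexagon and normalization identities: (Δ̃⊗_A id)(R̃) = R̃₁₃R̃₂₃, (id⊗_A Δ̃)(R̃) = R̃₁₃R̃₁₂, and (ε̃⊗_A id)(R̃) = (id⊗_A ε̃)(R̃) = (1_A⋊1_H)⊗_A(1_A⋊1_H). -/

import Mathlib

/-! Since `L ↦ 1 ⋊ L` is multiplicative (because `L ▷ 1 = ε(L) 1`), the map
`H ⊗ H ⊗ H → M ⊗ M ⊗ M` applying it in each factor sends the leg products `R₁₃R₂₃` and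
`R₁₃R₁₂` to the corresponding products of `R̃` in `M = A ⋊ H`. The lifted identities are
therefore the images of the hexagon and normalization axioms of `R` itself; they already hold in
`M ⊗ M ⊗ M`, before passing to the quotient by the `⊗_A`-relations. -/

open TensorProduct

/-- Embedding of `H ⊗ H` into the first and second factors of `H ⊗ H ⊗ H`. -/
noncomputable def leg12 (K H : Type) [CommRing K] [Ring H] [Algebra K H] :
    H ⊗[K] H →ₐ[K] H ⊗[K] (H ⊗[K] H) :=
  Algebra.TensorProduct.map (AlgHom.id K H) Algebra.TensorProduct.includeLeft

/-- Embedding of `H ⊗ H` into the second and third factors of `H ⊗ H ⊗ H`. -/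
noncomputable def leg23 (K H : Type) [CommRing K] [Ring H] [Algebra K H] :
    H ⊗[K] H →ₐ[K] H ⊗[K] (H ⊗[K] H) :=
  Algebra.TensorProduct.includeRight

/-- Embedding of `H ⊗ H` into the first and third factors of `H ⊗ H ⊗ H`. -/
noncomputable def leg13 (K H : Type) [CommRing K] [Ring H] [Algebra K H] :
    H ⊗[K] H →ₐ[K] H ⊗[K] (H ⊗[K] H) :=
  Algebra.TensorProduct.map (AlgHom.id K H) Algebra.TensorProduct.includeRight

/-- `Δ ⊗ id` as a map `H ⊗ H → H ⊗ (H ⊗ H)`. -/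
noncomputable def copL (K H : Type) [CommRing K] [Ring H] [Bialgebra K H] :
    H ⊗[K] H →ₗ[K] H ⊗[K] (H ⊗[K] H) :=
  (TensorProduct.assoc K H H H).toLinearMap ∘ₗ
    TensorProduct.map Coalgebra.comul LinearMap.id

/-- `id ⊗ Δ` as a map `H ⊗ H → H ⊗ (H ⊗ H)`. -/
noncomputable def copR (K H : Type) [CommRing K] [Ring H] [Bialgebra K H] :
    H ⊗[K] H →ₗ[K] H ⊗[K] (H ⊗[K] H) :=
  TensorProduct.map LinearMap.id Coalgebra.comul

/-- `ε ⊗ id : H ⊗ H → H`. -/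
noncomputable def ctL (K H : Type) [CommRing K] [Ring H] [Bialgebra K H] :
    H ⊗[K] H →ₗ[K] H :=
  (TensorProduct.lid K H).toLinearMap ∘ₗ TensorProduct.map Coalgebra.counit LinearMap.id

/-- `id ⊗ ε : H ⊗ H → H`. -/
noncomputable def ctR (K H : Type) [CommRing K] [Ring H] [Bialgebra K H] :
    H ⊗[K] H →ₗ[K] H :=
  (TensorProduct.rid K H).toLinearMap ∘ₗ TensorProduct.map LinearMap.id Coalgebra.counit
/-- The twisted star product `a ⋆_F b = (F̄₁ ▷ a) · (F̄₂ ▷ b)` determined by the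
action `act` and the inverse twist `Finv`. -/
noncomputable def starF {K H A : Type} [CommRing K] [Ring H] [Bialgebra K H]
    [Ring A] [Algebra K A]
    (act : H →ₗ[K] A →ₗ[K] A) (Finv : H ⊗[K] H) (a b : A) : A :=
  LinearMap.mul' K A ((TensorProduct.map (act.flip a) (act.flip b)) Finv)

/-- For `G = Σ G₁ ⊗ G₂ ∈ H ⊗ H`, the element `Σ (G₂ ▷ a) ⊗ G₁` of `A ⊗ H`
(e.g. the target map `t(a) = (R₂ ▷ a) ⋊ R₁` of the smash product bialgebroid). -/
noncomputable def tmap {K H A : Type} [CommRing K] [Ring H] [Bialgebra K H]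
    [Ring A] [Algebra K A]
    (act : H →ₗ[K] A →ₗ[K] A) (a : A) (G : H ⊗[K] H) : A ⊗[K] H :=
  (TensorProduct.comm K H A) ((TensorProduct.map LinearMap.id (act.flip a)) G)

/-- The bialgebroid counit `ε̃(a ⋊ L) = ε(L) a` of the smash product `A ⋊ H`. -/
noncomputable def epsSm (K H A : Type) [CommRing K] [Ring H] [Bialgebra K H]
    [Ring A] [Algebra K A] : A ⊗[K] H →ₗ[K] A :=
  (TensorProduct.rid K A).toLinearMap ∘ₗ TensorProduct.map LinearMap.id Coalgebra.counit

theorem TensorProduct.exists_fin_sum_tmul {R M N : Type*} [CommSemiring R] [AddCommMonoid M]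
    [Module R M] [AddCommMonoid N] [Module R N] (x : M ⊗[R] N) :
    ∃ (n : ℕ) (f : Fin n → M) (g : Fin n → N), x = ∑ i, f i ⊗ₜ[R] g i := by
  obtain ⟨S, rfl⟩ := TensorProduct.exists_finset x
  refine ⟨S.card, fun i ↦ (S.equivFin.symm i).1.1, fun i ↦ (S.equivFin.symm i).1.2, ?_⟩
  rw [← Finset.sum_coe_sort, ← S.equivFin.symm.sum_comp]

theorem Coalgebra.sum_counit_smul_of_comul_eq {R C : Type*} [CommSemiring R] [AddCommMonoid C]
    [Module R C] [Coalgebra R C] {c : C} {n : ℕ} {f g : Fin n → C}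
    (h : comul (R := R) c = ∑ i, f i ⊗ₜ[R] g i) :
    ∑ i, counit (R := R) (f i) • g i = c :=
  sum_counit_smul ⟨Finset.univ, f, g, h.symm⟩

section SmashProduct

variable (K H A : Type) [CommRing K] [AddCommMonoid H] [Module K H] [Ring A] [Algebra K A]

noncomputable def oneSmash : H →ₗ[K] A ⊗[K] H :=
  TensorProduct.mk K A H 1

noncomputable def oneSmash₃ :
    H ⊗[K] (H ⊗[K] H) →ₗ[K] (A ⊗[K] H) ⊗[K] ((A ⊗[K] H) ⊗[K] (A ⊗[K] H)) :=
  TensorProduct.map (oneSmash K H A) (TensorProduct.map (oneSmash K H A) (oneSmash K H A))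

variable {K H A}

@[simp]
theorem oneSmash₃_tmul (x y z : H) :
    oneSmash₃ K H A (x ⊗ₜ[K] (y ⊗ₜ[K] z)) =
      ((1 : A) ⊗ₜ[K] x) ⊗ₜ[K] (((1 : A) ⊗ₜ[K] y) ⊗ₜ[K] ((1 : A) ⊗ₜ[K] z)) :=
  rfl

end SmashProduct

theorem smash_one_tmul_mul_one_tmul {K H A : Type} [CommRing K] [Ring H] [Bialgebra K H]
    [Ring A] [Algebra K A] (act : H →ₗ[K] A →ₗ[K] A)
    (hact_unit : ∀ L : H, act L (1 : A) = Coalgebra.counit (R := K) L • (1 : A))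
    (m : (A ⊗[K] H) →ₗ[K] (A ⊗[K] H) →ₗ[K] (A ⊗[K] H))
    (hm : ∀ (a b : A) (L J : H) (n : ℕ) (L1 L2 : Fin n → H),
      Coalgebra.comul (R := K) L = ∑ i, L1 i ⊗ₜ[K] L2 i →
      m (a ⊗ₜ[K] L) (b ⊗ₜ[K] J) = ∑ i, (a * act (L1 i) b) ⊗ₜ[K] (L2 i * J))
    (L J : H) :
    m ((1 : A) ⊗ₜ[K] L) ((1 : A) ⊗ₜ[K] J) = (1 : A) ⊗ₜ[K] (L * J) := by
  obtain ⟨p, f, g, hfg⟩ := TensorProduct.exists_fin_sum_tmul (Coalgebra.comul (R := K) L)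
  calc m ((1 : A) ⊗ₜ[K] L) ((1 : A) ⊗ₜ[K] J)
      = ∑ i, (1 : A) ⊗ₜ[K] ((Coalgebra.counit (R := K) (f i) • g i) * J) := by
        rw [hm 1 1 L J p f g hfg]
        simp only [one_mul, hact_unit, TensorProduct.smul_tmul, smul_mul_assoc]
    _ = (1 : A) ⊗ₜ[K] (L * J) := by
        rw [← TensorProduct.tmul_sum, ← Finset.sum_mul,
          Coalgebra.sum_counit_smul_of_comul_eq hfg]

section HopfLegs

variable {K H : Type} [CommRing K] [Ring H] {n : ℕ} (r1 r2 : Fin n → H)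

theorem leg13_mul_leg23_sum_tmul [Algebra K H] :
    leg13 K H (∑ i, r1 i ⊗ₜ[K] r2 i) * leg23 K H (∑ i, r1 i ⊗ₜ[K] r2 i) =
      ∑ i, ∑ j, r1 i ⊗ₜ[K] (r1 j ⊗ₜ[K] (r2 i * r2 j)) := by
  simp only [map_sum, Finset.sum_mul_sum, leg13, leg23, Algebra.TensorProduct.map_tmul,
    Algebra.TensorProduct.includeRight_apply, AlgHom.id_apply,
    Algebra.TensorProduct.tmul_mul_tmul, one_mul, mul_one]

theorem leg13_mul_leg12_sum_tmul [Algebra K H] :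
    leg13 K H (∑ i, r1 i ⊗ₜ[K] r2 i) * leg12 K H (∑ i, r1 i ⊗ₜ[K] r2 i) =
      ∑ i, ∑ j, (r1 i * r1 j) ⊗ₜ[K] (r2 j ⊗ₜ[K] r2 i) := by
  simp only [map_sum, Finset.sum_mul_sum, leg13, leg12, Algebra.TensorProduct.map_tmul,
    Algebra.TensorProduct.includeRight_apply, Algebra.TensorProduct.includeLeft_apply,
    AlgHom.id_apply, Algebra.TensorProduct.tmul_mul_tmul, one_mul, mul_one]

variable [Bialgebra K H]

theorem copL_sum_tmul {p : ℕ} {c1 c2 : Fin n → Fin p → H}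
    (hc : ∀ i, Coalgebra.comul (R := K) (r1 i) = ∑ j, c1 i j ⊗ₜ[K] c2 i j) :
    copL K H (∑ i, r1 i ⊗ₜ[K] r2 i) = ∑ i, ∑ j, c1 i j ⊗ₜ[K] (c2 i j ⊗ₜ[K] r2 i) := by
  simp only [copL, LinearMap.coe_comp, LinearEquiv.coe_coe, Function.comp_apply, map_sum,
    TensorProduct.map_tmul, hc, LinearMap.id_apply, TensorProduct.sum_tmul,
    TensorProduct.assoc_tmul]

theorem copR_sum_tmul {p : ℕ} {d1 d2 : Fin n → Fin p → H}
    (hd : ∀ i, Coalgebra.comul (R := K) (r2 i) = ∑ j, d1 i j ⊗ₜ[K] d2 i j) :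
    copR K H (∑ i, r1 i ⊗ₜ[K] r2 i) = ∑ i, ∑ j, r1 i ⊗ₜ[K] (d1 i j ⊗ₜ[K] d2 i j) := by
  simp only [copR, map_sum, TensorProduct.map_tmul, hd, LinearMap.id_apply,
    TensorProduct.tmul_sum]

theorem ctL_sum_tmul :
    ctL K H (∑ i, r1 i ⊗ₜ[K] r2 i) = ∑ i, Coalgebra.counit (R := K) (r1 i) • r2 i := by
  simp [ctL]

theorem ctR_sum_tmul :
    ctR K H (∑ i, r1 i ⊗ₜ[K] r2 i) = ∑ i, Coalgebra.counit (R := K) (r2 i) • r1 i := by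
  simp [ctR]

end HopfLegs

theorem lifted_R_matrix_identities_general
    {K H A : Type} [CommRing K] [Ring H] [Bialgebra K H] [Ring A] [Algebra K A]
    (act : H →ₗ[K] A →ₗ[K] A)
    (hact_unit : ∀ L : H, act L (1 : A) = Coalgebra.counit (R := K) L • (1 : A))
    -- quasi-triangularity of (H, R)
    (R : H ⊗[K] H)
    (hhex₁ : copL K H R = leg13 K H R * leg23 K H R)
    (hhex₂ : copR K H R = leg13 K H R * leg12 K H R)
    (hRn₁ : ctL K H R = 1) (hRn₂ : ctR K H R = 1)
    -- the smash product multiplication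
    (m : (A ⊗[K] H) →ₗ[K] (A ⊗[K] H) →ₗ[K] (A ⊗[K] H))
    (hm : ∀ (a b : A) (L J : H) (n : ℕ) (L1 L2 : Fin n → H),
      Coalgebra.comul (R := K) L = ∑ i, L1 i ⊗ₜ[K] L2 i →
      m (a ⊗ₜ[K] L) (b ⊗ₜ[K] J) = ∑ i, (a * act (L1 i) b) ⊗ₜ[K] (L2 i * J))
    -- the submodule of M ⊗ M ⊗ M generated by the ⊗_A-relations in both places,
    -- with t(b) = (R₂ ▷ b) ⋊ R₁ and s(b) = b ⋊ 1
    (J : Submodule K ((A ⊗[K] H) ⊗[K] ((A ⊗[K] H) ⊗[K] (A ⊗[K] H)))) :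
    ∀ (n : ℕ) (r1 r2 : Fin n → H), R = ∑ i, r1 i ⊗ₜ[K] r2 i →
      -- (Δ̃ ⊗_A id)(R̃) = R̃₁₃ R̃₂₃
      (∀ (p : ℕ) (c1 c2 : Fin n → Fin p → H),
        (∀ i, Coalgebra.comul (R := K) (r1 i) = ∑ j, c1 i j ⊗ₜ[K] c2 i j) →
        J.mkQ (∑ i, ∑ j, ((1 : A) ⊗ₜ[K] c1 i j) ⊗ₜ[K]
            (((1 : A) ⊗ₜ[K] c2 i j) ⊗ₜ[K] ((1 : A) ⊗ₜ[K] r2 i))) =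
          J.mkQ (∑ i, ∑ j,
            (m ((1 : A) ⊗ₜ[K] r1 i) ((1 : A) ⊗ₜ[K] (1 : H))) ⊗ₜ[K]
              ((m ((1 : A) ⊗ₜ[K] (1 : H)) ((1 : A) ⊗ₜ[K] r1 j)) ⊗ₜ[K]
                (m ((1 : A) ⊗ₜ[K] r2 i) ((1 : A) ⊗ₜ[K] r2 j))))) ∧
      -- (id ⊗_A Δ̃)(R̃) = R̃₁₃ R̃₁₂
      (∀ (p : ℕ) (d1 d2 : Fin n → Fin p → H),
        (∀ i, Coalgebra.comul (R := K) (r2 i) = ∑ j, d1 i j ⊗ₜ[K] d2 i j) →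
        J.mkQ (∑ i, ∑ j, ((1 : A) ⊗ₜ[K] r1 i) ⊗ₜ[K]
            (((1 : A) ⊗ₜ[K] d1 i j) ⊗ₜ[K] ((1 : A) ⊗ₜ[K] d2 i j))) =
          J.mkQ (∑ i, ∑ j,
            (m ((1 : A) ⊗ₜ[K] r1 i) ((1 : A) ⊗ₜ[K] r1 j)) ⊗ₜ[K]
              ((m ((1 : A) ⊗ₜ[K] (1 : H)) ((1 : A) ⊗ₜ[K] r2 j)) ⊗ₜ[K]
                (m ((1 : A) ⊗ₜ[K] r2 i) ((1 : A) ⊗ₜ[K] (1 : H)))))) ∧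
      -- (ε̃ ⊗_A id)(R̃) = (id ⊗_A ε̃)(R̃) = (1 ⋊ 1) ⊗_A (1 ⋊ 1)
      (∑ i, Coalgebra.counit (R := K) (r1 i) • ((1 : A) ⊗ₜ[K] r2 i) =
        (1 : A) ⊗ₜ[K] (1 : H)) ∧
      (∑ i, Coalgebra.counit (R := K) (r2 i) • ((1 : A) ⊗ₜ[K] r1 i) =
        (1 : A) ⊗ₜ[K] (1 : H)) := by
  intro n r1 r2 hR
  subst hR
  have hmul := smash_one_tmul_mul_one_tmul act hact_unit m hm
  refine ⟨fun p c1 c2 hc ↦ congrArg J.mkQ ?_, fun p d1 d2 hd ↦ congrArg J.mkQ ?_, ?_, ?_⟩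
  · calc _ = oneSmash₃ K H A (copL K H _) := by
          rw [copL_sum_tmul r1 r2 hc]
          simp only [map_sum, oneSmash₃_tmul]
      _ = oneSmash₃ K H A (leg13 K H _ * leg23 K H _) := by rw [hhex₁]
      _ = _ := by
          rw [leg13_mul_leg23_sum_tmul]
          simp only [map_sum, oneSmash₃_tmul, hmul, mul_one, one_mul]
  · calc _ = oneSmash₃ K H A (copR K H _) := by
          rw [copR_sum_tmul r1 r2 hd]
          simp only [map_sum, oneSmash₃_tmul]
      _ = oneSmash₃ K H A (leg13 K H _ * leg12 K H _) := by rw [hhex₂]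
      _ = _ := by
          rw [leg13_mul_leg12_sum_tmul]
          simp only [map_sum, oneSmash₃_tmul, hmul, mul_one, one_mul]
  · rw [ctL_sum_tmul] at hRn₁
    simp only [← TensorProduct.tmul_smul, ← TensorProduct.tmul_sum, hRn₁]
  · rw [ctR_sum_tmul] at hRn₂
    simp only [← TensorProduct.tmul_smul, ← TensorProduct.tmul_sum, hRn₂]

/-- the lift `R̃ = (1 ⋊ R₁) ⊗_A (1 ⋊ R₂)` of the universal R-matrix
to the smash product bialgebroid `A ⋊ H` satisfies the lifted hexagon identities
`(Δ̃ ⊗_A id)(R̃) = R̃₁₃R̃₂₃`, `(id ⊗_A Δ̃)(R̃) = R̃₁₃R̃₁₂`, and the normalization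
`(ε̃ ⊗_A id)(R̃) = (id ⊗_A ε̃)(R̃) = (1 ⋊ 1) ⊗_A (1 ⋊ 1)`.  The identities are
stated in the quotient of `M ⊗ M ⊗ M` (`M = A ⋊ H`) by the `⊗_A`-relations. -/
theorem lifted_R_matrix_identities
    {K H A : Type} [CommRing K] [Ring H] [Bialgebra K H] [Ring A] [Algebra K A]
    (act : H →ₗ[K] A →ₗ[K] A)
    (hact_one : ∀ a : A, act 1 a = a)
    (hact_mul : ∀ (L J : H) (a : A), act (L * J) a = act L (act J a))
    (hact_unit : ∀ L : H, act L (1 : A) = Coalgebra.counit (R := K) L • (1 : A))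
    (hact_alg : ∀ (L : H) (a b : A) (n : ℕ) (L1 L2 : Fin n → H),
      Coalgebra.comul (R := K) L = ∑ i, L1 i ⊗ₜ[K] L2 i →
      act L (a * b) = ∑ i, act (L1 i) a * act (L2 i) b)
    -- quasi-triangularity of (H, R)
    (R Rinv : H ⊗[K] H)
    (hR₁ : R * Rinv = 1) (hR₂ : Rinv * R = 1)
    (hRΔ : ∀ x : H,
      R * Coalgebra.comul (R := K) x * Rinv =
        TensorProduct.comm K H H (Coalgebra.comul (R := K) x))
    (hhex₁ : copL K H R = leg13 K H R * leg23 K H R)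
    (hhex₂ : copR K H R = leg13 K H R * leg12 K H R)
    (hRn₁ : ctL K H R = 1) (hRn₂ : ctR K H R = 1)
    -- A is braided commutative w.r.t. R
    (hbr : ∀ (a b : A) (n : ℕ) (r1 r2 : Fin n → H),
      R = ∑ i, r1 i ⊗ₜ[K] r2 i → a * b = ∑ i, act (r2 i) b * act (r1 i) a)
    -- the smash product multiplication
    (m : (A ⊗[K] H) →ₗ[K] (A ⊗[K] H) →ₗ[K] (A ⊗[K] H))
    (hm : ∀ (a b : A) (L J : H) (n : ℕ) (L1 L2 : Fin n → H),
      Coalgebra.comul (R := K) L = ∑ i, L1 i ⊗ₜ[K] L2 i →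
      m (a ⊗ₜ[K] L) (b ⊗ₜ[K] J) = ∑ i, (a * act (L1 i) b) ⊗ₜ[K] (L2 i * J))
    -- the submodule of M ⊗ M ⊗ M generated by the ⊗_A-relations in both places,
    -- with t(b) = (R₂ ▷ b) ⋊ R₁ and s(b) = b ⋊ 1
    (J : Submodule K ((A ⊗[K] H) ⊗[K] ((A ⊗[K] H) ⊗[K] (A ⊗[K] H))))
    (hJ : J = Submodule.span K
      {z : (A ⊗[K] H) ⊗[K] ((A ⊗[K] H) ⊗[K] (A ⊗[K] H)) |
        (∃ (b : A) (x y w : A ⊗[K] H),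
          z = (m (tmap act b R) x) ⊗ₜ[K] (y ⊗ₜ[K] w) -
              x ⊗ₜ[K] ((m (b ⊗ₜ[K] (1 : H)) y) ⊗ₜ[K] w)) ∨
        (∃ (b : A) (x y w : A ⊗[K] H),
          z = x ⊗ₜ[K] ((m (tmap act b R) y) ⊗ₜ[K] w) -
              x ⊗ₜ[K] (y ⊗ₜ[K] (m (b ⊗ₜ[K] (1 : H)) w)))}) :
    ∀ (n : ℕ) (r1 r2 : Fin n → H), R = ∑ i, r1 i ⊗ₜ[K] r2 i →
      -- (Δ̃ ⊗_A id)(R̃) = R̃₁₃ R̃₂₃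
      (∀ (p : ℕ) (c1 c2 : Fin n → Fin p → H),
        (∀ i, Coalgebra.comul (R := K) (r1 i) = ∑ j, c1 i j ⊗ₜ[K] c2 i j) →
        J.mkQ (∑ i, ∑ j, ((1 : A) ⊗ₜ[K] c1 i j) ⊗ₜ[K]
            (((1 : A) ⊗ₜ[K] c2 i j) ⊗ₜ[K] ((1 : A) ⊗ₜ[K] r2 i))) =
          J.mkQ (∑ i, ∑ j,
            (m ((1 : A) ⊗ₜ[K] r1 i) ((1 : A) ⊗ₜ[K] (1 : H))) ⊗ₜ[K]
              ((m ((1 : A) ⊗ₜ[K] (1 : H)) ((1 : A) ⊗ₜ[K] r1 j)) ⊗ₜ[K]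
                (m ((1 : A) ⊗ₜ[K] r2 i) ((1 : A) ⊗ₜ[K] r2 j))))) ∧
      -- (id ⊗_A Δ̃)(R̃) = R̃₁₃ R̃₁₂
      (∀ (p : ℕ) (d1 d2 : Fin n → Fin p → H),
        (∀ i, Coalgebra.comul (R := K) (r2 i) = ∑ j, d1 i j ⊗ₜ[K] d2 i j) →
        J.mkQ (∑ i, ∑ j, ((1 : A) ⊗ₜ[K] r1 i) ⊗ₜ[K]
            (((1 : A) ⊗ₜ[K] d1 i j) ⊗ₜ[K] ((1 : A) ⊗ₜ[K] d2 i j))) =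
          J.mkQ (∑ i, ∑ j,
            (m ((1 : A) ⊗ₜ[K] r1 i) ((1 : A) ⊗ₜ[K] r1 j)) ⊗ₜ[K]
              ((m ((1 : A) ⊗ₜ[K] (1 : H)) ((1 : A) ⊗ₜ[K] r2 j)) ⊗ₜ[K]
                (m ((1 : A) ⊗ₜ[K] r2 i) ((1 : A) ⊗ₜ[K] (1 : H)))))) ∧
      -- (ε̃ ⊗_A id)(R̃) = (id ⊗_A ε̃)(R̃) = (1 ⋊ 1) ⊗_A (1 ⋊ 1)
      (∑ i, Coalgebra.counit (R := K) (r1 i) • ((1 : A) ⊗ₜ[K] r2 i) =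
        (1 : A) ⊗ₜ[K] (1 : H)) ∧
      (∑ i, Coalgebra.counit (R := K) (r2 i) • ((1 : A) ⊗ₜ[K] r1 i) =
        (1 : A) ⊗ₜ[K] (1 : H)) :=
  lifted_R_matrix_identities_general act hact_unit R hhex₁ hhex₂ hRn₁ hRn₂ m hm J
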